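/- Let ψ ∈ Γ̄ and define ψ^{(k)} = (1/k)·Id + (1 − 1/k)·ψ for k ∈ ℕ. Then ψ^{(k)} ∈ Γ̄, ‖ψ^{(k)} − ψ‖_∞ ≤ 2/k, (ψ^{(k)})' ≥ 1/k a.e., and ψ^{(k)} is invertible with inverse (ψ^{(k)})⁻¹ ∈ Γ, where Γ = {γ ∈ AC([0,1];[0,1]) : γ(0)=0, γ(1)=1, γ' > 0 a.e.}. -/

import Mathlib

open MeasureTheory Set

/-!
The density of `ψ⁽ᵏ⁾` is `g = 1/k + (1 - 1/k) ψ'`, which is `≥ 1/k`. Extended to all of `ℝ`,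
the primitive `Ψ` of `g` is then an order isomorphism of `ℝ` whose inverse `θ` pushes Lebesgue
measure forward to `g · Lebesgue`. Changing variables along `θ` shows that `θ` is the primitive
of `1 / (g ∘ θ)`, a bounded and everywhere positive density.
-/

/-- `γ ∈ Γ̄` with density (a.e. derivative) `g`: `γ` is absolutely continuous on
`[0,1]` with `γ(x) = ∫₀ˣ g`, `g ≥ 0` a.e., `γ(0) = 0` and `γ(1) = 1`. -/
def InGammaBar (γ g : ℝ → ℝ) : Prop :=
  IntegrableOn g (Set.Icc (0:ℝ) 1) ∧
  (∀ᵐ x ∂(volume.restrict (Set.Icc (0:ℝ) 1)), 0 ≤ g x) ∧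
  (∀ x ∈ Set.Icc (0:ℝ) 1, γ x = ∫ t in (0:ℝ)..x, g t) ∧
  γ 1 = 1

/-- `γ ∈ Γ` : as `Γ̄`, but with a.e. strictly positive derivative. -/
def InGamma (γ g : ℝ → ℝ) : Prop :=
  InGammaBar γ g ∧ ∀ᵐ x ∂(volume.restrict (Set.Icc (0:ℝ) 1)), 0 < g x

open Filter

namespace InGammaBar

variable {γ g : ℝ → ℝ}

theorem intervalIntegrable (h : InGammaBar γ g) {x y : ℝ} (hx : x ∈ Icc (0:ℝ) 1)
    (hy : y ∈ Icc (0:ℝ) 1) : IntervalIntegrable g volume x y :=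
  (h.1.mono_set (uIcc_subset_Icc hx hy)).intervalIntegrable

theorem map_zero (h : InGammaBar γ g) : γ 0 = 0 := by
  rw [h.2.2.1 0 ⟨le_rfl, zero_le_one⟩, intervalIntegral.integral_same]

theorem monotoneOn (h : InGammaBar γ g) : MonotoneOn γ (Icc 0 1) := by
  intro x hx y hy hxy
  have h0 : (0:ℝ) ∈ Icc (0:ℝ) 1 := ⟨le_rfl, zero_le_one⟩
  rw [← sub_nonneg, h.2.2.1 x hx, h.2.2.1 y hy, intervalIntegral.integral_interval_sub_left
    (h.intervalIntegrable h0 hy) (h.intervalIntegrable h0 hx)]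
  exact intervalIntegral.integral_nonneg_of_ae_restrict hxy
    (ae_restrict_of_ae_restrict_of_subset (Icc_subset_Icc hx.1 hy.2) h.2.1)

theorem mapsTo (h : InGammaBar γ g) : MapsTo γ (Icc 0 1) (Icc 0 1) := fun _ hx =>
  ⟨h.map_zero ▸ h.monotoneOn ⟨le_rfl, zero_le_one⟩ hx hx.1,
    h.2.2.2 ▸ h.monotoneOn hx ⟨zero_le_one, le_rfl⟩ hx.2⟩

theorem congr_ae (h : InGammaBar γ g) {g' : ℝ → ℝ}
    (hgg' : g =ᵐ[volume.restrict (Icc 0 1)] g') : InGammaBar γ g' := by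
  obtain ⟨hint, hnonneg, hγ, h1⟩ := h
  refine ⟨hint.congr hgg', ?_, fun x hx => ?_, h1⟩
  · filter_upwards [hnonneg, hgg'] with t ht heq
    rwa [← heq]
  · rw [hγ x hx]
    refine intervalIntegral.integral_congr_ae ?_
    filter_upwards [(ae_restrict_iff' measurableSet_Icc).1 hgg'] with t ht hmem
    rw [uIoc_of_le hx.1] at hmem
    exact ht ⟨hmem.1.le, hmem.2.trans hx.2⟩

theorem exists_measurable_nonneg (h : InGammaBar γ g) :
    ∃ G : ℝ → ℝ, Measurable G ∧ Integrable G ∧ (∀ x, 0 ≤ G x) ∧ InGammaBar γ G := by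
  have hmeas := h.1.aemeasurable
  refine ⟨(Icc 0 1).indicator fun x => |hmeas.mk g x|,
    hmeas.measurable_mk.abs.indicator measurableSet_Icc,
    (integrable_indicator_iff measurableSet_Icc).2 (h.1.congr hmeas.ae_eq_mk).abs,
    fun x => indicator_nonneg (fun _ _ => abs_nonneg _) x, h.congr_ae ?_⟩
  filter_upwards [hmeas.ae_eq_mk, h.2.1, ae_restrict_mem measurableSet_Icc] with x hmk hx0 hx
  rw [indicator_of_mem hx, ← hmk, abs_of_nonneg hx0]

theorem convex_comb {γ₁ g₁ γ₂ g₂ : ℝ → ℝ} (h₁ : InGammaBar γ₁ g₁) (h₂ : InGammaBar γ₂ g₂)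
    {a b : ℝ} (ha : 0 ≤ a) (hb : 0 ≤ b) (hab : a + b = 1) :
    InGammaBar (fun x => a * γ₁ x + b * γ₂ x) (fun x => a * g₁ x + b * g₂ x) := by
  refine ⟨(h₁.1.const_mul a).add (h₂.1.const_mul b), ?_, fun x hx => ?_, ?_⟩
  · filter_upwards [h₁.2.1, h₂.2.1] with t h1 h2
    positivity
  · have h0 : (0:ℝ) ∈ Icc (0:ℝ) 1 := ⟨le_rfl, zero_le_one⟩
    rw [intervalIntegral.integral_add ((h₁.intervalIntegrable h0 hx).const_mul a)
      ((h₂.intervalIntegrable h0 hx).const_mul b), intervalIntegral.integral_const_mul,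
      intervalIntegral.integral_const_mul, ← h₁.2.2.1 x hx, ← h₂.2.2.1 x hx]
  · simp only [h₁.2.2.2, h₂.2.2.2, mul_one, hab]

end InGammaBar

theorem inGammaBar_id : InGammaBar (fun x => x) (fun _ => 1) :=
  ⟨integrableOn_const (by simp), ae_of_all _ fun _ => zero_le_one, fun x _ => by simp, rfl⟩

section Primitive

variable {g : ℝ → ℝ}

theorem exists_orderIso_eq_primitive (hg : ∀ a b, IntervalIntegrable g volume a b) {c : ℝ}
    (hc : 0 < c) (hgc : ∀ x, c ≤ g x) : ∃ e : ℝ ≃o ℝ, ∀ x, e x = ∫ t in 0..x, g t := by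
  set Ψ : ℝ → ℝ := fun x => ∫ t in (0:ℝ)..x, g t
  have hgrowth : ∀ a b, a ≤ b → c * (b - a) ≤ Ψ b - Ψ a := by
    intro a b hab
    rw [intervalIntegral.integral_interval_sub_left (hg 0 b) (hg 0 a)]
    calc c * (b - a) = ∫ _ in a..b, c := by simp [mul_comm]
      _ ≤ ∫ t in a..b, g t :=
        intervalIntegral.integral_mono_on hab intervalIntegrable_const (hg a b) fun x _ => hgc x
  have hΨ0 : Ψ 0 = 0 := intervalIntegral.integral_same
  have hmono : StrictMono Ψ := fun a b hab => by
    nlinarith [hgrowth a b hab.le, mul_pos hc (sub_pos.2 hab)]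
  have htop : Tendsto Ψ atTop atTop := by
    refine tendsto_atTop_mono' _ ?_ (tendsto_id.const_mul_atTop hc)
    filter_upwards [eventually_ge_atTop 0] with y hy
    simpa [hΨ0] using hgrowth 0 y hy
  have hbot : Tendsto Ψ atBot atBot := by
    refine tendsto_atBot_mono' _ ?_ (tendsto_id.const_mul_atBot hc)
    filter_upwards [eventually_le_atBot 0] with y hy
    simpa [hΨ0] using hgrowth y 0 hy
  exact ⟨hmono.orderIsoOfSurjective Ψ
    ((intervalIntegral.continuous_primitive hg 0).surjective htop hbot), fun _ => rfl⟩

variable {e : ℝ ≃o ℝ}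

theorem map_symm_volume_eq_withDensity (hg : ∀ a b, IntervalIntegrable g volume a b)
    (hg0 : ∀ x, 0 ≤ g x) (he : ∀ x, e x = ∫ t in 0..x, g t) :
    volume.map e.symm = volume.withDensity fun x => ENNReal.ofReal (g x) := by
  have hmeas : Measurable e.symm := e.symm.continuous.measurable
  have hpre : ∀ a b, e.symm ⁻¹' Ioc a b = Ioc (e a) (e b) := fun a b => by simp
  refine Measure.ext_of_Ioc' _ _ (fun a b _ => ?_) (fun a b hab => ?_)
  · rw [Measure.map_apply hmeas measurableSet_Ioc, hpre, Real.volume_Ioc]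
    exact ENNReal.ofReal_ne_top
  · rw [Measure.map_apply hmeas measurableSet_Ioc, hpre, Real.volume_Ioc,
      withDensity_apply _ measurableSet_Ioc, he, he,
      intervalIntegral.integral_interval_sub_left (hg 0 b) (hg 0 a),
      intervalIntegral.integral_of_le hab.le,
      ofReal_integral_eq_lintegral_ofReal (hg a b).1 (ae_of_all _ hg0)]

theorem integral_inv_comp_symm (hgm : Measurable g) (hg : ∀ a b, IntervalIntegrable g volume a b)
    (hg0 : ∀ x, 0 < g x) (he : ∀ x, e x = ∫ t in 0..x, g t) {a b : ℝ} (hab : a ≤ b) :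
    ∫ t in a..b, (g (e.symm t))⁻¹ = e.symm b - e.symm a := by
  have hpre : e.symm ⁻¹' Ioc (e.symm a) (e.symm b) = Ioc a b := by simp
  have hcancel : ∀ x, (ENNReal.ofReal (g x)).toReal • (g x)⁻¹ = 1 := fun x => by
    rw [ENNReal.toReal_ofReal (hg0 x).le, smul_eq_mul, mul_inv_cancel₀ (hg0 x).ne']
  rw [intervalIntegral.integral_of_le hab, ← hpre, ← setIntegral_map (f := fun s => (g s)⁻¹) measurableSet_Ioc
      hgm.inv.aestronglyMeasurable e.symm.continuous.measurable.aemeasurable,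
    map_symm_volume_eq_withDensity hg (fun x => (hg0 x).le) he,
    setIntegral_withDensity_eq_setIntegral_toReal_smul (f := fun x => ENNReal.ofReal (g x))
      hgm.ennreal_ofReal
      (ae_of_all _ fun _ => ENNReal.ofReal_lt_top) _ measurableSet_Ioc]
  simp only [hcancel, setIntegral_const, smul_eq_mul, mul_one,
    Real.volume_real_Ioc_of_le (e.symm.monotone hab)]

theorem inGamma_symm_of_eq_primitive (hgm : Measurable g)
    (hg : ∀ a b, IntervalIntegrable g volume a b) {c : ℝ} (hc : 0 < c) (hgc : ∀ x, c ≤ g x)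
    (he : ∀ x, e x = ∫ t in 0..x, g t) (he1 : e 1 = 1) :
    InGamma e.symm fun t => (g (e.symm t))⁻¹ := by
  have hg0 : ∀ x, 0 < g x := fun x => hc.trans_le (hgc x)
  have he0 : e.symm 0 = 0 := e.symm_apply_eq.2 (by rw [he, intervalIntegral.integral_same])
  refine ⟨⟨?_, ae_of_all _ fun t => (inv_pos.2 (hg0 _)).le, fun x hx => ?_,
    e.symm_apply_eq.2 he1.symm⟩, ae_of_all _ fun t => inv_pos.2 (hg0 _)⟩
  · refine Measure.integrableOn_of_bounded (M := c⁻¹) (by simp)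
      (hgm.comp e.symm.continuous.measurable).inv.aestronglyMeasurable (ae_of_all _ fun t => ?_)
    rw [norm_inv, Real.norm_of_nonneg (hg0 _).le]
    exact inv_anti₀ hc (hgc _)
  · rw [integral_inv_comp_symm hgm hg hg0 he hx.1, he0, sub_zero]

end Primitive

/-- Let `ψ ∈ Γ̄` and `ψ⁽ᵏ⁾ = (1/k)·Id + (1−1/k)·ψ`.  Then
`ψ⁽ᵏ⁾ ∈ Γ̄` with a.e. derivative `≥ 1/k`, `‖ψ⁽ᵏ⁾ − ψ‖_∞ ≤ 2/k` on `[0,1]`, and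
`ψ⁽ᵏ⁾` is invertible on `[0,1]` with inverse in `Γ`. -/
theorem convex_combination_reparam (ψ gψ : ℝ → ℝ) (hψ : InGammaBar ψ gψ)
    (k : ℕ) (hk : 1 ≤ k)
    (ψk : ℝ → ℝ)
    (hψk : ∀ x, ψk x = (1 / (k:ℝ)) * x + (1 - 1 / (k:ℝ)) * ψ x) :
    (∃ gk : ℝ → ℝ, InGammaBar ψk gk ∧
      ∀ᵐ x ∂(volume.restrict (Icc (0:ℝ) 1)), 1 / (k:ℝ) ≤ gk x) ∧
    (∀ x ∈ Icc (0:ℝ) 1, |ψk x - ψ x| ≤ 2 / (k:ℝ)) ∧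
    ∃ θ gθ : ℝ → ℝ, InGamma θ gθ ∧
      (∀ x ∈ Icc (0:ℝ) 1, θ (ψk x) = x) ∧ (∀ x ∈ Icc (0:ℝ) 1, ψk (θ x) = x) := by
  have hk1 : (1:ℝ) ≤ k := by exact_mod_cast hk
  have hkpos : (0:ℝ) < 1 / k := by positivity
  have hkle : 0 ≤ 1 - 1 / (k:ℝ) := sub_nonneg.2 ((div_le_one (by positivity)).2 hk1)
  obtain ⟨G, hGm, hGi, hG0, hψG⟩ := hψ.exists_measurable_nonneg
  set gk : ℝ → ℝ := fun t => 1 / k * 1 + (1 - 1 / k) * G t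
  have hgk : ∀ t, 1 / (k:ℝ) ≤ gk t := fun t => by
    simpa [gk] using mul_nonneg hkle (hG0 t)
  have hgk_int : ∀ a b, IntervalIntegrable gk volume a b := fun a b =>
    intervalIntegrable_const.add (hGi.intervalIntegrable.const_mul _)
  have hψk_bar : InGammaBar ψk gk := by
    convert inGammaBar_id.convex_comb hψG hkpos.le hkle (by ring) using 1
    exact funext hψk
  obtain ⟨e, he⟩ := exists_orderIso_eq_primitive hgk_int hkpos hgk
  have hψk_e : EqOn ψk e (Icc 0 1) := fun x hx => (hψk_bar.2.2.1 x hx).trans (he x).symm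
  have hθ := inGamma_symm_of_eq_primitive (measurable_const.add (hGm.const_mul _)) hgk_int hkpos
    hgk he ((hψk_e ⟨zero_le_one, le_rfl⟩).symm.trans hψk_bar.2.2.2)
  refine ⟨⟨gk, hψk_bar, ae_of_all _ hgk⟩, fun x hx => ?_, e.symm, _, hθ,
    fun x hx => by rw [hψk_e hx, e.symm_apply_apply],
    fun x hx => by rw [hψk_e (hθ.1.mapsTo hx), e.apply_symm_apply]⟩
  calc |ψk x - ψ x| = 1 / k * |x - ψ x| := by
        rw [hψk, ← abs_of_pos hkpos, ← abs_mul, abs_of_pos hkpos]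
        ring_nf
    _ ≤ 1 / k * 1 := by
        gcongr
        exact abs_sub_le_of_nonneg_of_le hx.1 hx.2 (hψ.mapsTo hx).1 (hψ.mapsTo hx).2
    _ ≤ 2 / k := by
        rw [mul_one]
        gcongr
        norm_num
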